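/- arXiv:2506.16045 — 2 statements merged into one kernel-verified Lean document; each statement's English description precedes it below -/
import Mathlib

section
/- Let η > 0 and g ∈ ℝ² (representing ∇h), and define the 3×3 symmetric matrix M = η·[[I + g·gᵀ, (1/2)η·g], [(1/2)η·gᵀ, (1/3)η²]] in block form with I the 2×2 identity. Then M is positive definite. -/
/-!
Since `1/3 = 1/4 + 1/12`, the matrix `M / η` splits as `diag(1, 1, η²/12) + v vᵀ` with
`v = (g, η/2)`: a positive diagonal matrix plus a rank-one positive semidefinite one.
-/

open Matrix

lemma sgn_matrix_eq_diagonal_add_vecMulVec (η : ℝ) (g : Fin 2 → ℝ) :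
    !![1 + g 0 * g 0, g 0 * g 1, (1/2) * η * g 0;
       g 1 * g 0, 1 + g 1 * g 1, (1/2) * η * g 1;
       (1/2) * η * g 0, (1/2) * η * g 1, (1/3) * η^2] =
      diagonal ![1, 1, η ^ 2 / 12] + vecMulVec ![g 0, g 1, η / 2] (star ![g 0, g 1, η / 2]) := by
  ext i j
  fin_cases i <;> fin_cases j <;> simp [-mul_eq_mul_right_iff, -mul_eq_mul_left_iff] <;> ring

/-- The SGN coefficient matrix
M = η·[[I + g gᵀ, (η/2) g],[(η/2) gᵀ, η²/3]] (3×3, block form)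
is positive definite for η > 0 and any g ∈ ℝ². -/
theorem stmt7 (η : ℝ) (hη : 0 < η) (g : Fin 2 → ℝ)
    (M : Matrix (Fin 3) (Fin 3) ℝ)
    (hM : M = η • !![1 + g 0 * g 0, g 0 * g 1, (1/2) * η * g 0;
                     g 1 * g 0, 1 + g 1 * g 1, (1/2) * η * g 1;
                     (1/2) * η * g 0, (1/2) * η * g 1, (1/3) * η^2]) :
    M.PosDef := by
  have hdiag : (diagonal ![1, 1, η ^ 2 / 12]).PosDef :=
    posDef_diagonal_iff.mpr fun i => by fin_cases i <;> simp; positivity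
  rw [hM, sgn_matrix_eq_diagonal_add_vecMulVec]
  exact (hdiag.add_posSemidef (posSemidef_vecMulVec_self_star _)).smul hη
end

section
/- For the SBDF2 coefficients c(z) = z², b(z) = 2z − 1, every real λ ∈ (0, 1] satisfies: all roots z of c(z) − b(z) + λ·b(z) = 0 satisfy |z| < 1. Equivalently, the roots of z² − (2 − 2λ)z + (1 − λ) = 0 lie strictly inside the unit disk for 0 < λ ≤ 1. -/
open Complex

/-! The constraint polynomial is `z² + a z + b` with `a = -2(1 - λ)`, `b = 1 - λ`, and the
Schur–Cohn conditions `b < 1`, `|a| < 1 + b` hold for `0 < λ ≤ 1`. The imaginary part of the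
equation forces a non-real root to have real part `-a/2`, and then its real part gives `‖z‖² = b`.
A real root is excluded from `|x| ≥ 1` because the polynomial is positive at `±1`
and its vertex `-a/2` lies in `(-1, 1)`. -/

theorem abs_lt_one_of_sq_add_mul_add_eq_zero {a b x : ℝ} (hb : b < 1) (ha : |a| < 1 + b)
    (hx : x ^ 2 + a * x + b = 0) : |x| < 1 := by
  rw [abs_lt] at ha ⊢
  constructor <;> by_contra! h <;> nlinarith

theorem normSq_eq_of_sq_add_mul_add_eq_zero {a b : ℝ} {z : ℂ} (hz : z ^ 2 + a * z + b = 0)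
    (him : z.im ≠ 0) : normSq z = b := by
  have hre : z.re ^ 2 - z.im ^ 2 + a * z.re + b = 0 := by
    simpa [sq] using congrArg re hz
  have him' : z.im * (2 * z.re + a) = 0 := by
    have h := congrArg im hz
    simp only [sq, add_im, mul_im, ofReal_re, ofReal_im, zero_im, zero_mul, add_zero] at h
    linear_combination h
  have hx : 2 * z.re + a = 0 := (mul_eq_zero.mp him').resolve_left him
  rw [normSq_apply]
  linear_combination -hre + z.re * hx

theorem norm_lt_one_of_sq_add_mul_add_eq_zero {a b : ℝ} (hb : b < 1) (ha : |a| < 1 + b)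
    {z : ℂ} (hz : z ^ 2 + a * z + b = 0) : ‖z‖ < 1 := by
  by_cases him : z.im = 0
  · have hzx : z = (z.re : ℂ) := ext rfl (by simpa using him)
    rw [hzx, norm_real, Real.norm_eq_abs]
    refine abs_lt_one_of_sq_add_mul_add_eq_zero hb ha ?_
    exact_mod_cast hzx ▸ hz
  · rw [← sq_lt_one_iff₀ (norm_nonneg z), ← normSq_eq_norm_sq,
      normSq_eq_of_sq_add_mul_add_eq_zero hz him]
    exact hb

/-- Zero-stability of linearly implicit SBDF2: for every real λ ∈ (0,1],
all roots of z² − (2−2λ)z + (1−λ) = 0 lie strictly inside the unit disk. -/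
theorem stmt15 (lam : ℝ) (h0 : 0 < lam) (h1 : lam ≤ 1) :
    ∀ z : ℂ, z^2 - (2 - 2 * (lam : ℂ)) * z + (1 - (lam : ℂ)) = 0 →
      ‖z‖ < 1 := by
  intro z hz
  refine norm_lt_one_of_sq_add_mul_add_eq_zero (a := -2 * (1 - lam)) (b := 1 - lam)
    (by linarith) (abs_lt.mpr ⟨by linarith, by linarith⟩) ?_
  push_cast
  linear_combination hz
end
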